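/- Any two nonempty compact, totally disconnected, perfect metrizable spaces are homeomorphic (characterization of the Cantor set). -/

import Mathlib

/-!
Brouwer's theorem: both spaces are homeomorphic to `ℕ → Bool`. In a compact, totally disconnected,
second countable space there is a sequence of clopen sets `S n` separating points. Build a binary
tree of nonempty clopen sets by cutting every node at depth `n` along `S n`, or, when `S n` does not
cut it, along any clopen set that does (one exists because the space has no isolated points).
Sending a point to its branch is then a continuous bijection onto `ℕ → Bool`: nodes are open, so
the branch is locally constant at each finite depth; nodes at depth `n + 1` cannot contain two
points that `S n` separates; and compactness makes every branch nonempty.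
-/

open Set Filter Topology TopologicalSpace PiNat

namespace Brouwer

variable {X : Type*}

section Address

variable (D : List Bool → Set X)

open scoped Classical in
noncomputable def branch (x : X) : ℕ → List Bool
  | 0 => []
  | n + 1 => decide (x ∈ D (true :: branch x n)) :: branch x n

open scoped Classical in
noncomputable def address (x : X) (n : ℕ) : Bool := decide (x ∈ D (true :: branch D x n))

variable {D}

lemma res_address (x : X) (n : ℕ) : res (address D x) n = branch D x n := by
  induction n with
  | zero => rfl
  | succ n ih => rw [res_succ, ih]; rfl

lemma length_branch (x : X) (n : ℕ) : (branch D x n).length = n := by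
  induction n <;> simp [branch, *]

lemma mem_branch (hroot : D [] = univ) (hcover : ∀ l, D l ⊆ D (false :: l) ∪ D (true :: l))
    (x : X) (n : ℕ) : x ∈ D (branch D x n) := by
  induction n with
  | zero => simp [branch, hroot]
  | succ n ih =>
    by_cases hx : x ∈ D (true :: branch D x n)
    · simp [branch, hx]
    · simpa [branch, hx] using hcover _ ih

lemma branch_length_eq_of_mem (hsub : ∀ b l, D (b :: l) ⊆ D l)
    (hdisj : ∀ l, Disjoint (D (false :: l)) (D (true :: l))) {x : X} :
    ∀ {l : List Bool}, x ∈ D l → branch D x l.length = l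
  | [], _ => rfl
  | b :: l, hx => by
    have ih := branch_length_eq_of_mem hsub hdisj (hsub b l hx)
    rw [List.length_cons, branch, ih]
    cases b
    · simpa using disjoint_left.1 (hdisj l) hx
    · simpa using hx

end Address

def Splits (W C : Set X) : Prop := (C ∩ W).Nonempty ∧ (C \ W).Nonempty

def piece (W C : Set X) : Bool → Set X
  | true => C ∩ W
  | false => C \ W

lemma mem_piece {W C : Set X} {b : Bool} {x : X} :
    x ∈ piece W C b ↔ x ∈ C ∧ (x ∈ W ↔ b = true) := by
  cases b <;> simp [piece]

variable [TopologicalSpace X]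

structure IsClopenScheme (D : List Bool → Set X) : Prop where
  root : D [] = univ
  union_children : ∀ l, D (false :: l) ∪ D (true :: l) = D l
  disjoint_children : ∀ l, Disjoint (D (false :: l)) (D (true :: l))
  isClopen : ∀ l, IsClopen (D l)
  nonempty : ∀ l, (D l).Nonempty
  separating : ∀ x y : X, x ≠ y → ∃ l, x ∈ D l ∧ y ∉ D l

namespace IsClopenScheme

variable {D : List Bool → Set X} (hD : IsClopenScheme D)
include hD

lemma child_subset (b : Bool) (l : List Bool) : D (b :: l) ⊆ D l := by
  rw [← hD.union_children l]
  cases b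
  exacts [subset_union_left, subset_union_right]

lemma mem_iff_res_address {x : X} {l : List Bool} :
    x ∈ D l ↔ res (address D x) l.length = l := by
  rw [res_address]
  refine ⟨branch_length_eq_of_mem hD.child_subset hD.disjoint_children, fun h => ?_⟩
  rw [← h]
  exact mem_branch hD.root (fun l => (hD.union_children l).ge) x _

lemma continuous_address : Continuous (address D) := by
  refine continuous_pi fun n => continuous_iff_continuousAt.2 fun x => ?_
  have hnode : ∀ᶠ x' in 𝓝 x, res (address D x') (n + 1) = res (address D x) (n + 1) := by
    have hx : x ∈ D (res (address D x) (n + 1)) := by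
      rw [hD.mem_iff_res_address, res_length]
    filter_upwards [(hD.isClopen _).isOpen.mem_nhds hx] with x' hx'
    simpa [hD.mem_iff_res_address] using hx'
  refine tendsto_const_nhds.congr' (hnode.mono fun x' hx' => ?_)
  rw [res_succ, res_succ] at hx'
  exact (List.cons.inj hx').1.symm

lemma injective_address : Function.Injective (address D) := by
  intro x y hxy
  by_contra hne
  obtain ⟨l, hx, hy⟩ := hD.separating x y hne
  rw [hD.mem_iff_res_address] at hx hy
  exact hy (hxy ▸ hx)

lemma surjective_address [CompactSpace X] : Function.Surjective (address D) := by
  intro y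
  obtain ⟨x, hx⟩ := IsCompact.nonempty_iInter_of_sequence_nonempty_isCompact_isClosed
    (fun n => D (res y n)) (fun n => res_succ y n ▸ hD.child_subset _ _) (fun n => hD.nonempty _)
    (hD.isClopen _).isClosed.isCompact
    (fun n => (hD.isClopen _).isClosed)
  refine ⟨x, res_injective (funext fun n => ?_)⟩
  have hxn : x ∈ D (res y n) := mem_iInter.1 hx n
  rwa [hD.mem_iff_res_address, res_length] at hxn

theorem nonempty_homeomorph [CompactSpace X] : Nonempty (X ≃ₜ (ℕ → Bool)) :=
  ⟨hD.continuous_address.homeoOfEquivCompactToT2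
    (f := .ofBijective _ ⟨hD.injective_address, hD.surjective_address⟩)⟩

end IsClopenScheme

lemma exists_isClopen_splits [TotallySeparatedSpace X] (hX : ∀ x : X, ¬ IsOpen ({x} : Set X))
    {C : Set X} (hC : IsOpen C) (hne : C.Nonempty) : ∃ W, IsClopen W ∧ Splits W C := by
  obtain ⟨x, hx, y, hy, hxy⟩ : C.Nontrivial := by
    by_contra h
    obtain ⟨x, hx⟩ := hne
    exact hX x (Set.not_nontrivial_iff.1 h |>.eq_singleton_of_mem hx ▸ hC)
  obtain ⟨W, hW, hxW, hyW⟩ := exists_isClopen_of_totally_separated hxy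
  exact ⟨W, hW, ⟨x, hx, hxW⟩, ⟨y, hy, hyW⟩⟩

open scoped Classical in
noncomputable def splitter (B C : Set X) : Set X :=
  if Splits B C then B else Classical.epsilon fun W => IsClopen W ∧ Splits W C

lemma splitter_of_splits {B C : Set X} (h : Splits B C) : splitter B C = B := if_pos h

lemma isClopen_splitter_and_splits [TotallySeparatedSpace X]
    (hX : ∀ x : X, ¬ IsOpen ({x} : Set X)) {B C : Set X} (hB : IsClopen B) (hC : IsOpen C)
    (hne : C.Nonempty) : IsClopen (splitter B C) ∧ Splits (splitter B C) C := by
  by_cases h : Splits B C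
  · rw [splitter_of_splits h]
    exact ⟨hB, h⟩
  · rw [splitter, if_neg h]
    exact Classical.epsilon_spec (exists_isClopen_splits hX hC hne)

noncomputable def splittingScheme (S : ℕ → Set X) : List Bool → Set X
  | [] => univ
  | b :: l => piece (splitter (S l.length) (splittingScheme S l)) (splittingScheme S l) b

lemma splittingScheme_cons_of_splits {S : ℕ → Set X} {l : List Bool}
    (h : Splits (S l.length) (splittingScheme S l)) (b : Bool) :
    splittingScheme S (b :: l) = piece (S l.length) (splittingScheme S l) b := by
  rw [splittingScheme, splitter_of_splits h]

lemma isClopen_splittingScheme_and_nonempty [TotallySeparatedSpace X] [Nonempty X]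
    (hX : ∀ x : X, ¬ IsOpen ({x} : Set X)) {S : ℕ → Set X} (hS : ∀ n, IsClopen (S n)) :
    ∀ l, IsClopen (splittingScheme S l) ∧ (splittingScheme S l).Nonempty
  | [] => ⟨isClopen_univ, univ_nonempty⟩
  | b :: l => by
    obtain ⟨hC, hne⟩ := isClopen_splittingScheme_and_nonempty hX hS l
    obtain ⟨hW, hsplit⟩ := isClopen_splitter_and_splits hX (hS l.length) hC.isOpen hne
    cases b
    exacts [⟨hC.diff hW, hsplit.2⟩, ⟨hC.inter hW, hsplit.1⟩]

lemma splittingScheme_separating {S : ℕ → Set X} (hsep : ∀ x y, (∀ n, x ∈ S n ↔ y ∈ S n) → x = y)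
    {x y : X} (hxy : x ≠ y) : ∃ l, x ∈ splittingScheme S l ∧ y ∉ splittingScheme S l := by
  classical
  obtain ⟨n, hn⟩ : ∃ n, ¬(x ∈ S n ↔ y ∈ S n) := by
    by_contra! h
    exact hxy (hsep x y h)
  set l := branch (splittingScheme S) x n
  have hx : x ∈ splittingScheme S l := mem_branch rfl (fun _ => (sdiff_union_inter _ _).ge) x n
  by_cases hy : y ∈ splittingScheme S l
  · have hsplit : Splits (S l.length) (splittingScheme S l) := by
      rw [length_branch]
      by_cases hxS : x ∈ S n
      · exact ⟨⟨x, hx, hxS⟩, ⟨y, hy, fun hyS => hn (iff_of_true hxS hyS)⟩⟩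
      · exact ⟨⟨y, hy, by_contra fun hyS => hn (iff_of_false hxS hyS)⟩, ⟨x, hx, hxS⟩⟩
    refine ⟨decide (x ∈ S n) :: l, ?_, ?_⟩ <;>
      rw [splittingScheme_cons_of_splits hsplit, mem_piece, length_branch, decide_eq_true_iff]
    · exact ⟨hx, Iff.rfl⟩
    · exact fun h => hn h.2.symm
  · exact ⟨l, hx, hy⟩

lemma isClopenScheme_splittingScheme [TotallySeparatedSpace X] [Nonempty X]
    (hX : ∀ x : X, ¬ IsOpen ({x} : Set X)) {S : ℕ → Set X} (hS : ∀ n, IsClopen (S n))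
    (hsep : ∀ x y, (∀ n, x ∈ S n ↔ y ∈ S n) → x = y) :
    IsClopenScheme (splittingScheme S) where
  root := rfl
  union_children _ := sdiff_union_inter _ _
  disjoint_children _ := disjoint_sdiff_inter
  isClopen l := (isClopen_splittingScheme_and_nonempty hX hS l).1
  nonempty l := (isClopen_splittingScheme_and_nonempty hX hS l).2
  separating _ _ := splittingScheme_separating hsep

theorem exists_seq_isClopen_separating [CompactSpace X] [T2Space X] [TotallyDisconnectedSpace X]
    [SecondCountableTopology X] :
    ∃ S : ℕ → Set X, (∀ n, IsClopen (S n)) ∧ ∀ x y, (∀ n, x ∈ S n ↔ y ∈ S n) → x = y := by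
  obtain ⟨B, hB, hBc, hBasis⟩ := isTopologicalBasis_isClopen.exists_countable (α := X)
  have : HasCountableSeparatingOn X IsClopen univ :=
    ⟨⟨B, hBc, hB, fun x _ y _ h => (hBasis.inseparable_iff.2 h).eq⟩⟩
  obtain ⟨S, hS, hsep⟩ := exists_seq_separating X isClopen_empty univ
  exact ⟨S, hS, fun x y h => hsep x trivial y trivial h⟩

theorem nonempty_homeomorph_nat_bool [CompactSpace X] [T2Space X] [TotallyDisconnectedSpace X]
    [SecondCountableTopology X] [Nonempty X] (hX : ∀ x : X, ¬ IsOpen ({x} : Set X)) :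
    Nonempty (X ≃ₜ (ℕ → Bool)) := by
  obtain ⟨S, hS, hsep⟩ := exists_seq_isClopen_separating (X := X)
  exact (isClopenScheme_splittingScheme hX hS hsep).nonempty_homeomorph

end Brouwer

theorem stmt4 (X Y : Type*) [TopologicalSpace X] [TopologicalSpace Y]
    [TopologicalSpace.MetrizableSpace X] [TopologicalSpace.MetrizableSpace Y]
    [CompactSpace X] [CompactSpace Y] [Nonempty X] [Nonempty Y]
    [TotallyDisconnectedSpace X] [TotallyDisconnectedSpace Y]
    (hX : ∀ x : X, ¬ IsOpen ({x} : Set X))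
    (hY : ∀ y : Y, ¬ IsOpen ({y} : Set Y)) :
    Nonempty (X ≃ₜ Y) := by
  obtain ⟨e⟩ := Brouwer.nonempty_homeomorph_nat_bool hX
  obtain ⟨f⟩ := Brouwer.nonempty_homeomorph_nat_bool hY
  exact ⟨e.trans f.symm⟩
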